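/- arXiv:1809.01209 — 3 statements merged into one kernel-verified Lean document; each statement's English description precedes it below -/
import Mathlib

section
/- Let G be a group and H a subgroup such that for every nontrivial subgroup K of G subconjugate to H, the fixed point set (G/H)^K is a singleton. Then H is malnormal in G. -/
/-- If for every nontrivial subgroup `K` of `G` subconjugate to `H` the fixed point
set `(G/H)^K` is a singleton, then `H` is malnormal in `G`. -/
theorem stmt_5 {G : Type*} [Group G] (H : Subgroup G)
    (hfix : ∀ K : Subgroup G, K ≠ ⊥ → (∃ g : G, ∀ k ∈ K, g⁻¹ * k * g ∈ H) →
      ∃! x : G ⧸ H, ∀ k ∈ K, k • x = x) :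
    ∀ g : G, g ∉ H → ∀ x : G, x ∈ H → g⁻¹ * x * g ∈ H → x = 1 := by
  intro g hg x hx hconj
  by_contra hx1
  set K := Subgroup.zpowers x with hK
  have hKne : K ≠ ⊥ := by
    simp [hK, Subgroup.zpowers_eq_bot, hx1]
  have hsub : ∃ a : G, ∀ k ∈ K, a⁻¹ * k * a ∈ H := by
    refine ⟨1, fun k hk => ?_⟩
    obtain ⟨n, rfl⟩ := hk
    simpa using H.zpow_mem hx n
  obtain ⟨c, hc, huniq⟩ := hfix K hKne hsub
  have mem1 : ∀ k ∈ K, k • ((1 : G) : G ⧸ H) = ((1 : G) : G ⧸ H) := by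
    intro k hk
    obtain ⟨n, rfl⟩ := hk
    show (((x ^ n) * 1 : G) : G ⧸ H) = ((1 : G) : G ⧸ H)
    rw [QuotientGroup.eq]
    simpa using H.zpow_mem (H.inv_mem hx) n
  have memg : ∀ k ∈ K, k • ((g : G) : G ⧸ H) = ((g : G) : G ⧸ H) := by
    intro k hk
    obtain ⟨n, rfl⟩ := hk
    show (((x ^ n) * g : G) : G ⧸ H) = ((g : G) : G ⧸ H)
    rw [QuotientGroup.eq]
    have : (g⁻¹ * x * g) ^ n ∈ H := H.zpow_mem hconj n
    have h2 : g⁻¹ * x ^ n * g ∈ H := by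
      have e : (g⁻¹ * x * g) ^ n = g⁻¹ * x ^ n * g := by
        rw [show g⁻¹ * x * g = g⁻¹ * x * g⁻¹⁻¹ by group]
        rw [conj_zpow]; group
      rwa [e] at this
    have := H.inv_mem h2
    simpa [mul_assoc] using this
  have e1 := huniq _ mem1
  have e2 := huniq _ memg
  rw [← e1] at e2
  rw [QuotientGroup.eq] at e2
  simp only [mul_one] at e2
  exact hg (by simpa using H.inv_mem e2)
end

section
/- Let G = C_4 = ⟨t⟩ and H = C_2 = ⟨t²⟩ ≤ G. Then I_{(G,H)}(ℤG) := ker(id ⊗ ε : ℤ[G] ⊗_{ℤ[H]} ℤ[G] → ℤ[G]) is a free ℤG-module of rank one with basis t ⊗ 1 − 1 ⊗ t. -/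
open scoped TensorProduct

noncomputable section Stmt12Aux

namespace Stmt12

abbrev Gr := Multiplicative (ZMod 4)
abbrev tau : Gr := Multiplicative.ofAdd 1
abbrev Hs : Subgroup Gr := Subgroup.zpowers (tau ^ 2)
abbrev R : Type := MonoidAlgebra ℤ Hs
abbrev A : Type := MonoidAlgebra ℤ Gr

noncomputable instance algRA : Algebra R A :=
  (MonoidAlgebra.mapDomainAlgHom ℤ ℤ Hs.subtype).toRingHom.toAlgebra

def h2 : Hs := ⟨tau ^ 2, Subgroup.mem_zpowers _⟩

def tA : A := MonoidAlgebra.of ℤ Gr tau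

lemma tA_def : tA = MonoidAlgebra.single tau 1 := rfl

@[simp] lemma apply_addA (f g : A) (x : Gr) : (f + g).coeff x = f.coeff x + g.coeff x :=
  Finsupp.add_apply f.coeff g.coeff x

@[simp] lemma apply_singleA (x y : Gr) (c : ℤ) :
    (MonoidAlgebra.single x c : A).coeff y = if x = y then c else 0 :=
  Finsupp.single_apply

lemma singleR_add (h : Hs) (a b : ℤ) :
    (MonoidAlgebra.single h (a + b) : R) = MonoidAlgebra.single h a + MonoidAlgebra.single h b :=
  MonoidAlgebra.single_add _ _ _

lemma algebraMap_single (h : Hs) (c : ℤ) :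
    algebraMap R A (MonoidAlgebra.single h c) = MonoidAlgebra.single (h : Gr) c := by
  show MonoidAlgebra.mapDomainAlgHom ℤ ℤ Hs.subtype (MonoidAlgebra.single h c) = _
  simp [MonoidAlgebra.mapDomainAlgHom]

lemma mem_Hs (g : Gr) (hg : g ∈ Hs) : g = 1 ∨ g = tau ^ 2 := by
  obtain ⟨n, rfl⟩ := hg
  change (tau ^ 2) ^ n = 1 ∨ (tau ^ 2) ^ n = tau ^ 2
  have : (tau ^ 2 : Gr) ^ n = Multiplicative.ofAdd ((n : ZMod 4) * 2) := by
    show Multiplicative.ofAdd ((1 : ZMod 4) + 1) ^ n = _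
    rw [← ofAdd_zsmul]
    congr 1
    rw [zsmul_eq_mul]
    ring
  rw [this]
  generalize ((n : ZMod 4)) = m
  revert m
  decide

def q0 (f : A) : R :=
  MonoidAlgebra.single 1 (f.coeff 1) + MonoidAlgebra.single h2 (f.coeff (tau ^ 2))

def q1 (f : A) : R :=
  MonoidAlgebra.single 1 (f.coeff tau) + MonoidAlgebra.single h2 (f.coeff (tau ^ 3))

lemma q0_add (f g : A) : q0 (f + g) = q0 f + q0 g := by
  unfold q0
  rw [apply_addA, apply_addA, singleR_add, singleR_add]
  abel

lemma q1_add (f g : A) : q1 (f + g) = q1 f + q1 g := by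
  unfold q1
  rw [apply_addA, apply_addA, singleR_add, singleR_add]
  abel

lemma smul_def' (r : R) (f : A) : r • f = algebraMap R A r * f := Algebra.smul_def r f

lemma q0_smul (r : R) (f : A) : q0 (r • f) = r * q0 f := by
  induction r using MonoidAlgebra.induction_linear with
  | zero => simp [zero_smul, zero_mul, q0]
  | add a b ha hb => rw [add_smul, q0_add, ha, hb, add_mul]
  | single h c =>
    rw [smul_def', algebraMap_single]
    unfold q0
    rw [MonoidAlgebra.single_mul_apply, MonoidAlgebra.single_mul_apply,
      mul_add, MonoidAlgebra.single_mul_single, MonoidAlgebra.single_mul_single]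
    rcases mem_Hs h.1 h.2 with h1 | h1
    · have hh : h = 1 := Subtype.ext h1
      subst hh
      rw [show (((1:Hs) : Gr)⁻¹ * 1 : Gr) = 1 by decide,
        show (((1:Hs) : Gr)⁻¹ * tau ^ 2 : Gr) = tau ^ 2 by decide,
        one_mul, one_mul]
    · have hh : h = h2 := Subtype.ext h1
      subst hh
      rw [show (((h2:Hs) : Gr)⁻¹ * 1 : Gr) = tau ^ 2 by decide,
        show (((h2:Hs) : Gr)⁻¹ * tau ^ 2 : Gr) = 1 by decide,
        show (h2 * 1 : Hs) = h2 from mul_one _,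
        show (h2 * h2 : Hs) = 1 from Subtype.ext (by decide)]
      abel

lemma q1_smul (r : R) (f : A) : q1 (r • f) = r * q1 f := by
  induction r using MonoidAlgebra.induction_linear with
  | zero => simp [zero_smul, zero_mul, q1]
  | add a b ha hb => rw [add_smul, q1_add, ha, hb, add_mul]
  | single h c =>
    rw [smul_def', algebraMap_single]
    unfold q1
    rw [MonoidAlgebra.single_mul_apply, MonoidAlgebra.single_mul_apply,
      mul_add, MonoidAlgebra.single_mul_single, MonoidAlgebra.single_mul_single]
    rcases mem_Hs h.1 h.2 with h1 | h1
    · have hh : h = 1 := Subtype.ext h1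
      subst hh
      rw [show (((1:Hs) : Gr)⁻¹ * tau : Gr) = tau by decide,
        show (((1:Hs) : Gr)⁻¹ * tau ^ 3 : Gr) = tau ^ 3 by decide,
        one_mul, one_mul]
    · have hh : h = h2 := Subtype.ext h1
      subst hh
      rw [show (((h2:Hs) : Gr)⁻¹ * tau : Gr) = tau ^ 3 by decide,
        show (((h2:Hs) : Gr)⁻¹ * tau ^ 3 : Gr) = tau by decide,
        show (h2 * 1 : Hs) = h2 from mul_one _,
        show (h2 * h2 : Hs) = 1 from Subtype.ext (by decide)]
      abel

def p0 : A →ₗ[R] R where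
  toFun := q0
  map_add' := q0_add
  map_smul' r f := (q0_smul r f).trans (smul_eq_mul _ _).symm

def p1 : A →ₗ[R] R where
  toFun := q1
  map_add' := q1_add
  map_smul' r f := (q1_smul r f).trans (smul_eq_mul _ _).symm

/-- the decomposition `y = ι(q0 y) + ι(q1 y) * t`. -/
lemma decomp (y : A) :
    algebraMap R A (q0 y) + algebraMap R A (q1 y) * tA = y := by
  simp only [q0, q1, map_add, algebraMap_single, tA_def]
  rw [add_mul, MonoidAlgebra.single_mul_single, MonoidAlgebra.single_mul_single]
  ext g
  have hg : g = 1 ∨ g = tau ∨ g = tau ^ 2 ∨ g = tau ^ 3 := by revert g; decide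
  have c : ((h2 : Hs) : Gr) = tau ^ 2 := rfl
  rcases hg with rfl | rfl | rfl | rfl <;>
    simp (config := { decide := true }) [apply_addA, apply_singleA, c,
      show (tau ^ 2 * tau : Gr) = tau ^ 3 by decide]

def F0 : A ⊗[R] A →ₗ[R] A :=
  (LinearMap.mul' R A).comp (LinearMap.lTensor A ((Algebra.linearMap R A).comp p0))

def F1 : A ⊗[R] A →ₗ[R] A :=
  (LinearMap.mul' R A).comp (LinearMap.lTensor A ((Algebra.linearMap R A).comp p1))

lemma F0_tmul (a y : A) : F0 (a ⊗ₜ[R] y) = a * algebraMap R A (q0 y) := by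
  simp [F0, p0, LinearMap.lTensor_tmul, LinearMap.mul'_apply]

lemma F1_tmul (a y : A) : F1 (a ⊗ₜ[R] y) = a * algebraMap R A (q1 y) := by
  simp [F1, p1, LinearMap.lTensor_tmul, LinearMap.mul'_apply]

lemma tensor_decomp (x : A ⊗[R] A) : x = F0 x ⊗ₜ[R] 1 + F1 x ⊗ₜ[R] tA := by
  have key : (((TensorProduct.mk R A A).flip 1).comp F0
      + ((TensorProduct.mk R A A).flip tA).comp F1) = LinearMap.id := by
    apply TensorProduct.ext'
    intro a y
    simp only [LinearMap.add_apply, LinearMap.comp_apply, F0_tmul, F1_tmul,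
      TensorProduct.mk_apply, LinearMap.flip_apply, LinearMap.id_apply]
    rw [mul_comm a, ← smul_def' (q0 y) a, mul_comm a, ← smul_def' (q1 y) a,
      TensorProduct.smul_tmul, TensorProduct.smul_tmul,
      smul_def' (q0 y) 1, smul_def' (q1 y) tA, mul_one,
      ← TensorProduct.tmul_add, decomp]
  have h := DFunLike.congr_fun key x
  simpa using h.symm

lemma phi_F (x : A ⊗[R] A) : LinearMap.mul' R A x = F0 x + F1 x * tA := by
  conv_lhs => rw [tensor_decomp x]
  rw [map_add, LinearMap.mul'_apply, LinearMap.mul'_apply, mul_one]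

lemma q1_one : q1 (1 : A) = 0 := by
  simp (config := { decide := true }) [q1, MonoidAlgebra.one_def, apply_singleA]

lemma q1_t : q1 tA = 1 := by
  simp (config := { decide := true }) [q1, tA_def, apply_singleA, MonoidAlgebra.one_def]

lemma F1_shape (c : A) : F1 ((c * tA) ⊗ₜ[R] (1:A) - c ⊗ₜ[R] tA) = -c := by
  rw [map_sub, F1_tmul, F1_tmul, q1_one, q1_t, map_zero, map_one, mul_zero, mul_one, zero_sub]

lemma main :
    (LinearMap.mul' R A) (tA ⊗ₜ[R] (1:A) - (1:A) ⊗ₜ[R] tA) = 0 ∧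
    ∀ x : A ⊗[R] A, (LinearMap.mul' R A) x = 0 →
      ∃! c : A, x = (c * tA) ⊗ₜ[R] (1:A) - c ⊗ₜ[R] tA := by
  constructor
  · rw [map_sub, LinearMap.mul'_apply, LinearMap.mul'_apply, mul_one, one_mul, sub_self]
  · intro x hx
    refine ⟨-F1 x, ?_, ?_⟩
    · have hphi : F0 x + F1 x * tA = 0 := by rw [← phi_F]; exact hx
      have hF0 : F0 x = -F1 x * tA := by
        rw [neg_mul]; exact eq_neg_of_add_eq_zero_left hphi
      calc x = F0 x ⊗ₜ[R] 1 + F1 x ⊗ₜ[R] tA := tensor_decomp x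
        _ = (-F1 x * tA) ⊗ₜ[R] (1:A) - (-F1 x) ⊗ₜ[R] tA := by
            rw [hF0, sub_eq_add_neg, ← TensorProduct.neg_tmul, neg_neg]
    · intro c' hc'
      have h := congrArg F1 hc'
      rw [F1_shape] at h
      rw [← neg_neg c', ← h]

end Stmt12

end Stmt12Aux

open scoped TensorProduct


/-- `G = C₄ = ⟨t⟩`, `H = C₂ = ⟨t²⟩ ≤ G`.  The kernel
`I_{(G,H)}(ℤG) = ker(ℤ[G] ⊗_{ℤ[H]} ℤ[G] → ℤ[G])` is a free `ℤG`-module of rank one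
with basis `t ⊗ 1 - 1 ⊗ t`:  every element of the kernel is uniquely of the form
`c • (t ⊗ 1 - 1 ⊗ t) = (c·t) ⊗ 1 - c ⊗ t` with `c ∈ ℤG`. -/
theorem stmt_12 :
    letI G := Multiplicative (ZMod 4)
    letI τ : G := Multiplicative.ofAdd 1
    letI Hsub : Subgroup G := Subgroup.zpowers (τ ^ 2)
    letI R := MonoidAlgebra ℤ Hsub
    letI A := MonoidAlgebra ℤ G
    letI alg : Algebra R A := (MonoidAlgebra.mapDomainAlgHom ℤ ℤ
      Hsub.subtype).toRingHom.toAlgebra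
    letI φ : A ⊗[R] A →ₗ[R] A := LinearMap.mul' R A
    letI tA : A := MonoidAlgebra.of ℤ G τ
    letI b : A ⊗[R] A := tA ⊗ₜ[R] 1 - 1 ⊗ₜ[R] tA
    φ b = 0 ∧ ∀ x : A ⊗[R] A, φ x = 0 →
      ∃! c : A, x = (c * tA) ⊗ₜ[R] (1 : A) - c ⊗ₜ[R] tA := by
  exact Stmt12.main
end

section
/- Let G be a group, H a subgroup, and K₁, K₂ two nontrivial subgroups in the family F(H) generated by a malnormal subgroup H, with K₁ ≤ g₁Hg₁⁻¹ and K₂ ≤ g₂Hg₂⁻¹. Then the relation K₁ ∼ K₂ defined by g₁Hg₁⁻¹ ∩ g₂Hg₂⁻¹ ≠ {1} is well defined (independent of the choices of g₁, g₂) and is an equivalence relation on the nontrivial members of F(H). -/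
lemma mem_conj_iff {G : Type*} [Group G] (H : Subgroup G) (g x : G) :
    x ∈ Subgroup.map (MulAut.conj g).toMonoidHom H ↔ g⁻¹ * x * g ∈ H := by
  constructor
  · rintro ⟨h, hh, rfl⟩
    simpa [mul_assoc] using hh
  · intro hx
    exact ⟨g⁻¹ * x * g, hx, by simp [MulAut.conj]; group⟩

lemma key_lemma {G : Type*} [Group G] (H : Subgroup G)
    (hmal : ∀ g : G, g ∉ H → ∀ x : G, x ∈ H → g⁻¹ * x * g ∈ H → x = 1)
    (a b : G)
    (hne : Subgroup.map (MulAut.conj a).toMonoidHom H ⊓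
        Subgroup.map (MulAut.conj b).toMonoidHom H ≠ ⊥) :
    Subgroup.map (MulAut.conj a).toMonoidHom H =
      Subgroup.map (MulAut.conj b).toMonoidHom H := by
  rw [Subgroup.ne_bot_iff_exists_ne_one] at hne
  obtain ⟨⟨x, hx⟩, hx1⟩ := hne
  simp only [Subgroup.mem_inf] at hx
  obtain ⟨hxa, hxb⟩ := hx
  rw [mem_conj_iff] at hxa hxb
  have hx1' : x ≠ 1 := fun h => hx1 (Subtype.ext h)
  have hab : a⁻¹ * b ∈ H := by
    by_contra hc
    have h0 := hmal (a⁻¹ * b) hc (a⁻¹ * x * a) hxa (by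
      have he : (a⁻¹ * b)⁻¹ * (a⁻¹ * x * a) * (a⁻¹ * b) = b⁻¹ * x * b := by group
      rw [he]; exact hxb)
    apply hx1'
    have : x = a * (a⁻¹ * x * a) * a⁻¹ := by group
    rw [this, h0]; group
  ext y
  rw [mem_conj_iff, mem_conj_iff]
  set h := a⁻¹ * b with hh
  have key : ∀ z : G, z ∈ H ↔ h⁻¹ * z * h ∈ H := fun z =>
    ⟨fun hz => H.mul_mem (H.mul_mem (H.inv_mem hab) hz) hab,
     fun hz => by
      have : z = h * (h⁻¹ * z * h) * h⁻¹ := by group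
      rw [this]; exact H.mul_mem (H.mul_mem hab hz) (H.inv_mem hab)⟩
  rw [key (a⁻¹ * y * a)]
  have : h⁻¹ * (a⁻¹ * y * a) * h = b⁻¹ * y * b := by rw [hh]; group
  rw [this]

/-- Let `H` be malnormal in `G`.  On the nontrivial members of the family `F(H)`
generated by `H`, the relation `K₁ ∼ K₂ ⟺ g₁Hg₁⁻¹ ∩ g₂Hg₂⁻¹ ≠ {1}` (where
`Kᵢ ≤ gᵢHgᵢ⁻¹`) is well defined (independent of the choice of the `gᵢ`) and is an
equivalence relation (reflexive, symmetric and transitive on nontrivial members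
of `F(H)`). -/
theorem stmt_17 {G : Type*} [Group G] (H : Subgroup G)
    (hmal : ∀ g : G, g ∉ H → ∀ x : G, x ∈ H → g⁻¹ * x * g ∈ H → x = 1) :
    letI cH : G → Subgroup G := fun g => Subgroup.map (MulAut.conj g).toMonoidHom H
    letI r : Subgroup G → Subgroup G → Prop := fun K₁ K₂ =>
      ∃ g₁ g₂ : G, K₁ ≤ cH g₁ ∧ K₂ ≤ cH g₂ ∧ cH g₁ ⊓ cH g₂ ≠ ⊥
    -- well-definedness
    (∀ (K₁ K₂ : Subgroup G) (g₁ g₂ g₁' g₂' : G), K₁ ≠ ⊥ → K₂ ≠ ⊥ →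
      K₁ ≤ cH g₁ → K₁ ≤ cH g₁' → K₂ ≤ cH g₂ → K₂ ≤ cH g₂' →
      ((cH g₁ ⊓ cH g₂ ≠ ⊥) ↔ (cH g₁' ⊓ cH g₂' ≠ ⊥))) ∧
    -- reflexivity
    (∀ K : Subgroup G, K ≠ ⊥ → (∃ g : G, K ≤ cH g) → r K K) ∧
    -- symmetry
    (∀ K₁ K₂ : Subgroup G, r K₁ K₂ → r K₂ K₁) ∧
    -- transitivity
    (∀ K₁ K₂ K₃ : Subgroup G, K₁ ≠ ⊥ → K₂ ≠ ⊥ → K₃ ≠ ⊥ →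
      r K₁ K₂ → r K₂ K₃ → r K₁ K₃) := by
  have key : ∀ a b : G, Subgroup.map (MulAut.conj a).toMonoidHom H ⊓
      Subgroup.map (MulAut.conj b).toMonoidHom H ≠ ⊥ →
      Subgroup.map (MulAut.conj a).toMonoidHom H =
        Subgroup.map (MulAut.conj b).toMonoidHom H := key_lemma H hmal
  have uniq : ∀ (K : Subgroup G) (a b : G), K ≠ ⊥ →
      K ≤ Subgroup.map (MulAut.conj a).toMonoidHom H →
      K ≤ Subgroup.map (MulAut.conj b).toMonoidHom H →
      Subgroup.map (MulAut.conj a).toMonoidHom H =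
        Subgroup.map (MulAut.conj b).toMonoidHom H := by
    intro K a b hK ha hb
    exact key a b (fun h => hK (le_bot_iff.mp (h ▸ le_inf ha hb)))
  refine ⟨?_, ?_, ?_, ?_⟩
  · intro K₁ K₂ g₁ g₂ g₁' g₂' hK₁ hK₂ h1 h1' h2 h2'
    beta_reduce
    rw [uniq K₁ g₁ g₁' hK₁ h1 h1', uniq K₂ g₂ g₂' hK₂ h2 h2']
  · intro K hK ⟨g, hg⟩
    exact ⟨g, g, hg, hg, fun h => hK (le_bot_iff.mp (h ▸ le_inf hg hg))⟩
  · rintro K₁ K₂ ⟨g₁, g₂, h1, h2, hne⟩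
    refine ⟨g₂, g₁, h2, h1, fun h => hne ?_⟩
    rwa [inf_comm]
  · rintro K₁ K₂ K₃ hK₁ hK₂ hK₃ ⟨a, b, h1, h2, hab⟩ ⟨b', c, h2', h3, hbc⟩
    have e1 := key a b hab
    have e2 := key b' c hbc
    have e3 := uniq K₂ b b' hK₂ h2 h2'
    refine ⟨a, c, h1, h3, fun h => hK₃ ?_⟩
    beta_reduce at h
    rw [e1, e3, e2, inf_idem] at h
    exact le_bot_iff.mp (h ▸ h3)
end
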